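/- arXiv:2210.00960 — 5 statements merged into one kernel-verified Lean document; each statement's English description precedes it below -/
import Mathlib

section
/- Let E be a real Hilbert space (e.g. EuclideanSpace ℝ (Fin d)) and let h : E → ℝ be differentiable with gradient ∇h satisfying ‖∇h(θ1) − ∇h(θ2)‖ ≤ β‖θ1 − θ2‖ + η for all θ1, θ2, where β > 0 and η > 0. Then for all θ1, θ2, h(θ1) − h(θ2) ≤ ⟪∇h(θ2), θ1 − θ2⟫ + (β/2)‖θ1 − θ2‖² + η‖θ1 − θ2‖. -/
/-!
Along the segment `t ↦ θ2 + t • v`, `v = θ1 - θ2`, the derivative of `h` is `⟪g (θ2 + t • v), v⟫`,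
which by Cauchy–Schwarz and the approximate Lipschitz bound exceeds `⟪g θ2, v⟫` by at most
`(β t ‖v‖ + η) ‖v‖`. Integrating this affine bound over `[0, 1]` gives the claim; the integration is
done by the mean value theorem, so no integrability of the derivative is needed.
-/

open RealInnerProductSpace Set

theorem sub_le_of_hasDerivAt_le_affine {φ φ' : ℝ → ℝ} {a b : ℝ}
    (hφ : ∀ t ∈ Icc (0 : ℝ) 1, HasDerivAt φ (φ' t) t)
    (hle : ∀ t ∈ Ioo (0 : ℝ) 1, φ' t ≤ a + b * t) :
    φ 1 - φ 0 ≤ a + b / 2 := by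
  set ψ : ℝ → ℝ := fun t => φ t - (a * t + b / 2 * t ^ 2)
  have hψ : ∀ t ∈ Icc (0 : ℝ) 1, HasDerivAt ψ (φ' t - (a + b * t)) t := fun t ht => by
    refine ((hφ t ht).sub (((hasDerivAt_id' t).const_mul a).add
      ((hasDerivAt_pow 2 t).const_mul (b / 2)))).congr_deriv ?_
    push_cast; ring
  have hanti : AntitoneOn ψ (Icc 0 1) := by
    refine antitoneOn_of_hasDerivWithinAt_nonpos (f' := fun t => φ' t - (a + b * t))
      (convex_Icc 0 1) (fun t ht => (hψ t ht).continuousAt.continuousWithinAt)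
      (fun t ht => ?_) (fun t ht => ?_)
    · rw [interior_Icc] at ht
      exact (hψ t (Ioo_subset_Icc_self ht)).hasDerivWithinAt
    · rw [interior_Icc] at ht
      exact sub_nonpos.2 (hle t ht)
  have := hanti (left_mem_Icc.2 zero_le_one) (right_mem_Icc.2 zero_le_one) zero_le_one
  simp only [ψ] at this
  linarith

theorem HasGradientAt.hasDerivAt_comp_add_smul
    {E : Type*} [NormedAddCommGroup E] [InnerProductSpace ℝ E] [CompleteSpace E]
    {h : E → ℝ} {x v g : E} {t : ℝ} (hg : HasGradientAt h g (x + t • v)) :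
    HasDerivAt (fun s : ℝ => h (x + s • v)) ⟪g, v⟫ t := by
  have hline : HasDerivAt (fun s : ℝ => x + s • v) v t := by
    simpa using ((hasDerivAt_id t).smul_const v).const_add x
  exact hg.hasFDerivAt.comp_hasDerivAt t hline

theorem approx_descent_lemma_general
    {E : Type*} [NormedAddCommGroup E] [InnerProductSpace ℝ E] [CompleteSpace E]
    (h : E → ℝ) (g : E → E) (β η : ℝ)
    (hgrad : ∀ θ : E, HasGradientAt h (g θ) θ)
    (happrox : ∀ θ1 θ2 : E, ‖g θ1 - g θ2‖ ≤ β * ‖θ1 - θ2‖ + η) :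
    ∀ θ1 θ2 : E,
      h θ1 - h θ2 ≤ ⟪g θ2, θ1 - θ2⟫ + β / 2 * ‖θ1 - θ2‖ ^ 2 + η * ‖θ1 - θ2‖ := by
  intro θ1 θ2
  set v := θ1 - θ2
  have hbound : ∀ t ∈ Ioo (0 : ℝ) 1,
      ⟪g (θ2 + t • v), v⟫ ≤ (⟪g θ2, v⟫ + η * ‖v‖) + β * ‖v‖ ^ 2 * t := fun t ht => by
    have hdist : ‖(θ2 + t • v) - θ2‖ = t * ‖v‖ := by
      rw [add_sub_cancel_left, norm_smul, Real.norm_of_nonneg ht.1.le]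
    calc ⟪g (θ2 + t • v), v⟫ = ⟪g θ2, v⟫ + ⟪g (θ2 + t • v) - g θ2, v⟫ := by
          rw [inner_sub_left]; ring
      _ ≤ ⟪g θ2, v⟫ + ‖g (θ2 + t • v) - g θ2‖ * ‖v‖ := by gcongr; exact real_inner_le_norm _ _
      _ ≤ ⟪g θ2, v⟫ + (β * (t * ‖v‖) + η) * ‖v‖ := by
          gcongr; exact hdist ▸ happrox _ _
      _ = (⟪g θ2, v⟫ + η * ‖v‖) + β * ‖v‖ ^ 2 * t := by ring
  have := sub_le_of_hasDerivAt_le_affine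
    (fun t _ => (hgrad (θ2 + t • v)).hasDerivAt_comp_add_smul) hbound
  simp only [one_smul, zero_smul, add_zero, v, add_sub_cancel] at this
  linarith

/-- Lemma 4.2(i) (η-approximate descent lemma): if `h` is differentiable with gradient
`g` satisfying `‖g θ1 - g θ2‖ ≤ β‖θ1 - θ2‖ + η`, then
`h θ1 - h θ2 ≤ ⟪g θ2, θ1 - θ2⟫ + (β/2)‖θ1 - θ2‖² + η‖θ1 - θ2‖`. -/
theorem approx_descent_lemma
    {E : Type*} [NormedAddCommGroup E] [InnerProductSpace ℝ E] [CompleteSpace E]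
    (h : E → ℝ) (g : E → E) (β η : ℝ) (hβ : 0 < β) (hη : 0 < η)
    (hgrad : ∀ θ : E, HasGradientAt h (g θ) θ)
    (happrox : ∀ θ1 θ2 : E, ‖g θ1 - g θ2‖ ≤ β * ‖θ1 - θ2‖ + η) :
    ∀ θ1 θ2 : E,
      h θ1 - h θ2 ≤ ⟪g θ2, θ1 - θ2⟫ + β / 2 * ‖θ1 - θ2‖ ^ 2 + η * ‖θ1 - θ2‖ :=
  approx_descent_lemma_general h g β η hgrad happrox
end

section
/- Let E be a real Hilbert space and let h : E → ℝ be differentiable, convex, and η-approximately β-gradient Lipschitz, i.e. ‖∇h(θ1) − ∇h(θ2)‖ ≤ β‖θ1 − θ2‖ + η for all θ1, θ2, with β > 0, η > 0. For 0 < α ≤ 1/β define the gradient update G_α(θ) = θ − α∇h(θ). Then for all θ1, θ2, ‖G_α(θ1) − G_α(θ2)‖ ≤ ‖θ1 − θ2‖ + αη. -/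
/-!
Testing the tangent inequality of the convex function `h` at `θ₁` against the point
`w = θ₂ - s • (∇h θ₂ - ∇h θ₁)` and chaining it with the tangent inequality at `w` improves the
first-order condition by `(‖∇h θ₂ - ∇h θ₁‖ - η)₊² / (4β)`, once `s` is optimized. Adding this
to the same inequality with `θ₁`, `θ₂` exchanged gives the approximate co-coercivity
`⟪∇h θ₁ - ∇h θ₂, θ₁ - θ₂⟫ ≥ (‖∇h θ₁ - ∇h θ₂‖ - η)₊² / (2β)`, and expanding
`‖(θ₁ - θ₂) - α (∇h θ₁ - ∇h θ₂)‖²` with `α ≤ 1/β` bounds it by `(‖θ₁ - θ₂‖ + αη)²`.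
-/

open InnerProductSpace

theorem ConvexOn.add_le_of_hasFDerivAt {E : Type*} [NormedAddCommGroup E] [NormedSpace ℝ E]
    {s : Set E} {f : E → ℝ} {f' : StrongDual ℝ E} {a b : E}
    (hf : ConvexOn ℝ s f) (ha : a ∈ s) (hb : b ∈ s) (hfa : HasFDerivAt f f' a) :
    f a + f' (b - a) ≤ f b := by
  set ℓ : ℝ →ᵃ[ℝ] E := AffineMap.lineMap a b
  have hℓ₀ : ℓ 0 = a := AffineMap.lineMap_apply_zero a b
  have hℓ₁ : ℓ 1 = b := AffineMap.lineMap_apply_one a b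
  have hline : ConvexOn ℝ (ℓ ⁻¹' s) (f ∘ ℓ) := hf.comp_affineMap ℓ
  have hderiv : HasDerivAt (f ∘ ℓ) (f' (b - a)) 0 :=
    (hℓ₀ ▸ hfa).comp_hasDerivAt 0 AffineMap.hasDerivAt_lineMap
  have := hline.le_slope_of_hasDerivAt (by simpa [hℓ₀]) (by simpa [hℓ₁]) zero_lt_one hderiv
  rw [slope_def_field, Function.comp_apply, Function.comp_apply, hℓ₀, hℓ₁] at this
  linarith

theorem ConvexOn.add_inner_le_of_hasGradientAt {E : Type*} [NormedAddCommGroup E]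
    [InnerProductSpace ℝ E] [CompleteSpace E] {s : Set E} {f : E → ℝ} {f' a b : E}
    (hf : ConvexOn ℝ s f) (ha : a ∈ s) (hb : b ∈ s) (hfa : HasGradientAt f f' a) :
    f a + ⟪f', b - a⟫_ℝ ≤ f b := by
  simpa using hf.add_le_of_hasFDerivAt ha hb (hasGradientAt_iff_hasFDerivAt.mp hfa)

section ApproxLipschitz

variable {E F : Type*}

def ApproxLipschitzWith [SeminormedAddGroup E] [SeminormedAddGroup F]
    (β η : ℝ) (g : E → F) : Prop :=
  ∀ x y, ‖g x - g y‖ ≤ β * ‖x - y‖ + η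

theorem ApproxLipschitzWith.const_nonneg [SeminormedAddGroup E] [SeminormedAddGroup F]
    [Nonempty E] {β η : ℝ} {g : E → F} (hg : ApproxLipschitzWith β η g) : 0 ≤ η := by
  obtain ⟨x⟩ := ‹Nonempty E›
  simpa using hg x x

end ApproxLipschitz

section ConvexGradient

variable {E : Type*} [NormedAddCommGroup E] [InnerProductSpace ℝ E] [CompleteSpace E]
  {f : E → ℝ} {g : E → E} {β η : ℝ}

theorem ConvexOn.add_inner_add_inner_le (hf : ConvexOn ℝ Set.univ f)
    (hg : ∀ x, HasGradientAt f (g x) x) (θ₁ θ₂ w : E) :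
    f θ₁ + ⟪g θ₁, θ₂ - θ₁⟫_ℝ + ⟪g w - g θ₁, θ₂ - w⟫_ℝ ≤ f θ₂ := by
  have h₁ := hf.add_inner_le_of_hasGradientAt trivial (Set.mem_univ w) (hg θ₁)
  have h₂ := hf.add_inner_le_of_hasGradientAt trivial (Set.mem_univ θ₂) (hg w)
  have : ⟪g θ₁, θ₂ - θ₁⟫_ℝ + ⟪g w - g θ₁, θ₂ - w⟫_ℝ = ⟪g θ₁, w - θ₁⟫_ℝ + ⟪g w, θ₂ - w⟫_ℝ := by
    simp only [inner_sub_left, inner_sub_right]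
    ring
  linarith

theorem ConvexOn.add_inner_add_le_of_approxLipschitzWith (hf : ConvexOn ℝ Set.univ f)
    (hg : ∀ x, HasGradientAt f (g x) x) (hL : ApproxLipschitzWith β η g) (θ₁ θ₂ : E)
    {s : ℝ} (hs : 0 ≤ s) :
    f θ₁ + ⟪g θ₁, θ₂ - θ₁⟫_ℝ +
        (s * ‖g θ₂ - g θ₁‖ * (‖g θ₂ - g θ₁‖ - η) - β * (s * ‖g θ₂ - g θ₁‖) ^ 2) ≤ f θ₂ := by
  set v := g θ₂ - g θ₁
  set w := θ₂ - s • v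
  have hlip : ‖g w - g θ₂‖ ≤ β * (s * ‖v‖) + η := by
    simpa [w, norm_smul, abs_of_nonneg hs] using hL w θ₂
  have hcs : -(‖g w - g θ₂‖ * ‖v‖) ≤ ⟪g w - g θ₂, v⟫_ℝ :=
    neg_le_of_abs_le (abs_real_inner_le_norm _ _)
  have hgain : ⟪g w - g θ₁, θ₂ - w⟫_ℝ = s * (‖v‖ ^ 2 + ⟪g w - g θ₂, v⟫_ℝ) := by
    rw [show θ₂ - w = s • v by simp [w], inner_smul_right,
      show g w - g θ₁ = v + (g w - g θ₂) by simp [v], inner_add_left, real_inner_self_eq_norm_sq]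
  calc f θ₁ + ⟪g θ₁, θ₂ - θ₁⟫_ℝ + (s * ‖v‖ * (‖v‖ - η) - β * (s * ‖v‖) ^ 2)
      ≤ f θ₁ + ⟪g θ₁, θ₂ - θ₁⟫_ℝ + ⟪g w - g θ₁, θ₂ - w⟫_ℝ := by
        rw [hgain]
        have := mul_le_mul_of_nonneg_right hlip (norm_nonneg v)
        nlinarith
    _ ≤ f θ₂ := hf.add_inner_add_inner_le hg θ₁ θ₂ w

theorem ConvexOn.add_inner_add_sq_le_of_approxLipschitzWith (hf : ConvexOn ℝ Set.univ f)
    (hg : ∀ x, HasGradientAt f (g x) x) (hL : ApproxLipschitzWith β η g) (hβ : 0 < β)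
    (θ₁ θ₂ : E) :
    f θ₁ + ⟪g θ₁, θ₂ - θ₁⟫_ℝ + max (‖g θ₂ - g θ₁‖ - η) 0 ^ 2 / (4 * β) ≤ f θ₂ := by
  set t := ‖g θ₂ - g θ₁‖
  rcases le_or_gt t η with hle | hlt
  · simpa [max_eq_right (sub_nonpos.mpr hle)] using
      hf.add_inner_add_le_of_approxLipschitzWith hg hL θ₁ θ₂ le_rfl
  · have ht : 0 < t := hL.const_nonneg.trans_lt hlt
    -- `s * t = (t - η) / (2β)` maximizes `s * t * (t - η) - β * (s * t) ^ 2`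
    have key := hf.add_inner_add_le_of_approxLipschitzWith hg hL θ₁ θ₂
      (s := (t - η) / (2 * β * t)) (by positivity)
    have hst : (t - η) / (2 * β * t) * t = (t - η) / (2 * β) := by field_simp
    rw [hst] at key
    rw [max_eq_left (by linarith)]
    convert key using 2
    field_simp
    ring

theorem ConvexOn.sq_div_le_inner_of_approxLipschitzWith (hf : ConvexOn ℝ Set.univ f)
    (hg : ∀ x, HasGradientAt f (g x) x) (hL : ApproxLipschitzWith β η g) (hβ : 0 < β)
    (θ₁ θ₂ : E) :
    max (‖g θ₁ - g θ₂‖ - η) 0 ^ 2 / (2 * β) ≤ ⟪g θ₁ - g θ₂, θ₁ - θ₂⟫_ℝ := by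
  have h₁₂ := hf.add_inner_add_sq_le_of_approxLipschitzWith hg hL hβ θ₁ θ₂
  have h₂₁ := hf.add_inner_add_sq_le_of_approxLipschitzWith hg hL hβ θ₂ θ₁
  rw [norm_sub_rev] at h₁₂
  have : ⟪g θ₁ - g θ₂, θ₁ - θ₂⟫_ℝ = -(⟪g θ₁, θ₂ - θ₁⟫_ℝ + ⟪g θ₂, θ₁ - θ₂⟫_ℝ) := by
    simp only [inner_sub_left, inner_sub_right]
    ring
  have : max (‖g θ₁ - g θ₂‖ - η) 0 ^ 2 / (2 * β) =
      2 * (max (‖g θ₁ - g θ₂‖ - η) 0 ^ 2 / (4 * β)) := by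
    field_simp
    ring
  linarith

end ConvexGradient

theorem norm_sub_smul_le_of_sq_div_le_inner {E : Type*} [NormedAddCommGroup E]
    [InnerProductSpace ℝ E] {u v : E} {α β η : ℝ} (hβ : 0 < β) (hα : 0 ≤ α) (hαβ : α ≤ 1 / β)
    (hη : 0 ≤ η) (hv : ‖v‖ ≤ β * ‖u‖ + η)
    (hco : max (‖v‖ - η) 0 ^ 2 / (2 * β) ≤ ⟪v, u⟫_ℝ) :
    ‖u - α • v‖ ≤ ‖u‖ + α * η := by
  set m := max (‖v‖ - η) 0
  have hm : 0 ≤ m := le_max_right _ _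
  have hvm : ‖v‖ ≤ m + η := by linarith [le_max_left (‖v‖ - η) 0]
  have hαβ' : α * β ≤ 1 := by rwa [le_div_iff₀ hβ] at hαβ
  have hαm : α * m ≤ ‖u‖ := by
    have : m ≤ β * ‖u‖ := max_le (by linarith) (by positivity)
    nlinarith
  have hinner : α ^ 2 * m ^ 2 ≤ 2 * α * ⟪v, u⟫_ℝ := by
    have := mul_le_mul_of_nonneg_left hco (by positivity : 0 ≤ 2 * α * β)
    rw [show 2 * α * β * (m ^ 2 / (2 * β)) = α * m ^ 2 by field_simp] at this
    nlinarith [mul_le_mul_of_nonneg_right hαβ' (by positivity : 0 ≤ α * m ^ 2)]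
  have hsq : ‖u - α • v‖ ^ 2 ≤ (‖u‖ + α * η) ^ 2 :=
    calc ‖u - α • v‖ ^ 2 = ‖u‖ ^ 2 - 2 * α * ⟪v, u⟫_ℝ + α ^ 2 * ‖v‖ ^ 2 := by
          rw [norm_sub_sq_real, inner_smul_right, norm_smul, Real.norm_of_nonneg hα,
            real_inner_comm]
          ring
      _ ≤ ‖u‖ ^ 2 - α ^ 2 * m ^ 2 + α ^ 2 * (m + η) ^ 2 := by
          gcongr
      _ = ‖u‖ ^ 2 + 2 * (α * η) * (α * m) + (α * η) ^ 2 := by ring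
      _ ≤ ‖u‖ ^ 2 + 2 * (α * η) * ‖u‖ + (α * η) ^ 2 := by gcongr
      _ = (‖u‖ + α * η) ^ 2 := by ring
  exact (sq_le_sq₀ (norm_nonneg _) (by positivity)).mp hsq

theorem approx_nonexpansive_general
    {E : Type*} [NormedAddCommGroup E] [InnerProductSpace ℝ E] [CompleteSpace E]
    (h : E → ℝ) (g : E → E) (β η : ℝ) (hβ : 0 < β)
    (hconv : ConvexOn ℝ Set.univ h)
    (hgrad : ∀ θ : E, HasGradientAt h (g θ) θ)
    (happrox : ∀ θ1 θ2 : E, ‖g θ1 - g θ2‖ ≤ β * ‖θ1 - θ2‖ + η)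
    (α : ℝ) (hα : 0 < α) (hαβ : α ≤ 1 / β)
    (G : E → E) (hG : ∀ θ : E, G θ = θ - α • g θ) :
    ∀ θ1 θ2 : E, ‖G θ1 - G θ2‖ ≤ ‖θ1 - θ2‖ + α * η := by
  intro θ1 θ2
  have hL : ApproxLipschitzWith β η g := happrox
  rw [hG, hG, show θ1 - α • g θ1 - (θ2 - α • g θ2) = θ1 - θ2 - α • (g θ1 - g θ2) by module]
  exact norm_sub_smul_le_of_sq_div_le_inner hβ hα.le hαβ hL.const_nonneg (happrox θ1 θ2)
    (hconv.sq_div_le_inner_of_approxLipschitzWith hgrad hL hβ θ1 θ2)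

/-- Lemma 4.3(ii): for a convex, η-approximately β-gradient Lipschitz function and
step size `0 < α ≤ 1/β`, the gradient update `G_α(θ) = θ - α∇h(θ)` is
αη-approximately non-expansive. -/
theorem approx_nonexpansive
    {E : Type*} [NormedAddCommGroup E] [InnerProductSpace ℝ E] [CompleteSpace E]
    (h : E → ℝ) (g : E → E) (β η : ℝ) (hβ : 0 < β) (hη : 0 < η)
    (hconv : ConvexOn ℝ Set.univ h)
    (hgrad : ∀ θ : E, HasGradientAt h (g θ) θ)
    (happrox : ∀ θ1 θ2 : E, ‖g θ1 - g θ2‖ ≤ β * ‖θ1 - θ2‖ + η)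
    (α : ℝ) (hα : 0 < α) (hαβ : α ≤ 1 / β)
    (G : E → E) (hG : ∀ θ : E, G θ = θ - α • g θ) :
    ∀ θ1 θ2 : E, ‖G θ1 - G θ2‖ ≤ ‖θ1 - θ2‖ + α * η :=
  approx_nonexpansive_general h g β η hβ hconv hgrad happrox α hα hαβ G hG
end

section
/- Let (Z, 𝒵) be a measurable space with probability measure μ, let Θ be a measurable space, let h : Θ × Z → ℝ be measurable, and let (Ω, ν) be a probability space modeling the internal randomness of an algorithm A : Zⁿ × Ω → Θ. Assume all integrals appearing below exist (suitable integrability of (S, ω, z) ↦ h(A(S,ω), z) with respect to μⁿ ⊗ ν ⊗ μ). Suppose A is ε-uniformly stable: for all datasets S, S' ∈ Zⁿ that differ in at most one coordinate and for all z ∈ Z, ∫_Ω (h(A(S,ω),z) − h(A(S',ω),z)) dν(ω) ≤ ε. Define the population risk R_μ(θ) = ∫ h(θ,z) dμ(z) and the empirical risk R_S(θ) = (1/n)∑_{i=1}^n h(θ, S_i). Then |∫_{Zⁿ}∫_Ω (R_μ(A(S,ω)) − R_S(A(S,ω))) dν(ω) dμⁿ(S)| ≤ ε. -/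
open MeasureTheory

section AuxLemmas

variable {α β γ : Type*} [MeasurableSpace α] [MeasurableSpace β] [MeasurableSpace γ]

/-- swapping the second and third factors of a double product is measure preserving. -/
lemma aux_swap23 (μa : Measure α) (μb : Measure β) (μc : Measure γ)
    [SFinite μa] [SFinite μb] [SFinite μc] :
    MeasurePreserving (fun p : (α × β) × γ => ((p.1.1, p.2), p.1.2))
      ((μa.prod μb).prod μc) ((μa.prod μc).prod μb) := by
  have h1 := measurePreserving_prodAssoc μa μb μc
  have h2 : MeasurePreserving (Prod.map (id : α → α) (Prod.swap : β × γ → γ × β))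
      (μa.prod (μb.prod μc)) (μa.prod (μc.prod μb)) :=
    (MeasurePreserving.id μa).prod Measure.measurePreserving_swap
  have h3 : MeasurePreserving
      ((MeasurableEquiv.prodAssoc : (α × γ) × β ≃ᵐ α × γ × β).symm)
      (μa.prod (μc.prod μb)) ((μa.prod μc).prod μb) :=
    (measurePreserving_prodAssoc μa μc μb).symm MeasurableEquiv.prodAssoc
  have hfe : (fun p : (α × β) × γ => ((p.1.1, p.2), p.1.2)) =
      (⇑(MeasurableEquiv.prodAssoc : (α × γ) × β ≃ᵐ α × γ × β).symm ∘
        Prod.map (id : α → α) (Prod.swap : β × γ → γ × β) ∘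
        ⇑(MeasurableEquiv.prodAssoc : (α × β) × γ ≃ᵐ α × β × γ)) := by
    funext p; rfl
  rw [hfe]
  exact (h3.comp h2).comp h1

/-- the measurable equivalence swapping the second and third factors. -/
def swap23Equiv (α β γ : Type*) [MeasurableSpace α] [MeasurableSpace β] [MeasurableSpace γ] :
    ((α × β) × γ) ≃ᵐ ((α × γ) × β) :=
  { toEquiv :=
    { toFun := fun p => ((p.1.1, p.2), p.1.2)
      invFun := fun p => ((p.1.1, p.2), p.1.2)
      left_inv := fun _ => rfl
      right_inv := fun _ => rfl }
    measurable_toFun := ((measurable_fst.comp measurable_fst).prodMk measurable_snd).prodMk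
      (measurable_snd.comp measurable_fst)
    measurable_invFun := ((measurable_fst.comp measurable_fst).prodMk measurable_snd).prodMk
      (measurable_snd.comp measurable_fst) }

lemma aux_insertNth {Z : Type*} {m : ℕ} (i : Fin (m + 1)) (S : Fin (m + 1) → Z) (z : Z) :
    i.insertNth z (i.removeNth S) = Function.update S i z := by
  funext j
  rcases eq_or_ne j i with rfl | hj
  · simp
  · obtain ⟨k, rfl⟩ := Fin.exists_succAbove_eq hj
    rw [Fin.insertNth_apply_succAbove, Function.update_of_ne (i.succAbove_ne k), Fin.removeNth]

/-- replacing the `i`-th coordinate with a fresh sample (while remembering the old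
coordinate) is measure preserving for an i.i.d. product measure. -/
lemma aux_update {Z : Type*} [MeasurableSpace Z] (μ : Measure Z) [IsProbabilityMeasure μ]
    {m : ℕ} (i : Fin (m + 1)) :
    MeasurePreserving
      (fun p : (Fin (m + 1) → Z) × Z => (Function.update p.1 i p.2, p.1 i))
      ((Measure.pi fun _ : Fin (m + 1) => μ).prod μ)
      ((Measure.pi fun _ : Fin (m + 1) => μ).prod μ) := by
  set W := (Fin m → Z)
  set πW : Measure W := Measure.pi fun _ => μ with hπW
  set e := MeasurableEquiv.piFinSuccAbove (fun _ : Fin (m + 1) => Z) i with he_def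
  have he : MeasurePreserving e (Measure.pi fun _ : Fin (m + 1) => μ) (μ.prod πW) :=
    measurePreserving_piFinSuccAbove (fun _ : Fin (m + 1) => μ) i
  have hg : MeasurePreserving (fun q : (Z × W) × Z => ((q.2, q.1.2), q.1.1))
      ((μ.prod πW).prod μ) ((μ.prod πW).prod μ) := by
    have h1 := aux_swap23 μ πW μ
    have h2 : MeasurePreserving (Prod.map (Prod.swap : Z × Z → Z × Z) (id : W → W))
        ((μ.prod μ).prod πW) ((μ.prod μ).prod πW) :=
      Measure.measurePreserving_swap.prod (MeasurePreserving.id πW)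
    have h3 := aux_swap23 μ μ πW
    have hfe : (fun q : (Z × W) × Z => ((q.2, q.1.2), q.1.1)) =
        ((fun p : (Z × Z) × W => ((p.1.1, p.2), p.1.2)) ∘
          Prod.map (Prod.swap : Z × Z → Z × Z) (id : W → W) ∘
          (fun p : (Z × W) × Z => ((p.1.1, p.2), p.1.2))) := by
      funext q; rfl
    rw [hfe]
    exact (h3.comp h2).comp h1
  have hU := ((he.symm e).prod (MeasurePreserving.id μ)).comp
    (hg.comp (he.prod (MeasurePreserving.id μ)))
  have hfe : (fun p : (Fin (m + 1) → Z) × Z => (Function.update p.1 i p.2, p.1 i)) =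
      (Prod.map ⇑e.symm (id : Z → Z) ∘
        (fun q : (Z × W) × Z => ((q.2, q.1.2), q.1.1)) ∘
        Prod.map ⇑e (id : Z → Z)) := by
    funext p
    obtain ⟨S, z⟩ := p
    simp only [Function.comp_apply, Prod.map_apply, id_eq, he_def,
      MeasurableEquiv.piFinSuccAbove_apply, MeasurableEquiv.piFinSuccAbove_symm_apply,
      Fin.insertNthEquiv_apply, Fin.insertNthEquiv_symm_apply]
    rw [show ((Fin.insertNthEquiv (fun _ => Z) i) (z, i.removeNth S)) =
      i.insertNth z (i.removeNth S) from rfl, aux_insertNth]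
  rw [hfe]
  exact hU

lemma aux_measurable_updSwap {Z Ω : Type*} [MeasurableSpace Z] [MeasurableSpace Ω]
    {m : ℕ} (i : Fin (m + 1)) :
    Measurable (fun p : ((Fin (m + 1) → Z) × Ω) × Z =>
      ((Function.update p.1.1 i p.2, p.1.2), p.1.1 i)) := by
  refine Measurable.prodMk (Measurable.prodMk ?_ (measurable_snd.comp measurable_fst))
    ((measurable_pi_apply i).comp (measurable_fst.comp measurable_fst))
  refine measurable_pi_lambda _ fun j => ?_
  have : (fun p : ((Fin (m + 1) → Z) × Ω) × Z => Function.update p.1.1 i p.2 j) =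
      fun p => if j = i then p.2 else p.1.1 j := by
    funext p; rw [Function.update_apply]
  rw [this]
  split_ifs
  · exact measurable_snd
  · exact (measurable_pi_apply j).comp (measurable_fst.comp measurable_fst)

/-- swapping the `i`-th coordinate of the sample with the extra data point. -/
def updSwapEquiv {Z Ω : Type*} [MeasurableSpace Z] [MeasurableSpace Ω]
    {m : ℕ} (i : Fin (m + 1)) :
    (((Fin (m + 1) → Z) × Ω) × Z) ≃ᵐ (((Fin (m + 1) → Z) × Ω) × Z) :=
  { toEquiv :=
    { toFun := fun p => ((Function.update p.1.1 i p.2, p.1.2), p.1.1 i)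
      invFun := fun p => ((Function.update p.1.1 i p.2, p.1.2), p.1.1 i)
      left_inv := fun p => by
        obtain ⟨⟨S, ω⟩, z⟩ := p
        simp [Function.update_idem, Function.update_self, Function.update_eq_self]
      right_inv := fun p => by
        obtain ⟨⟨S, ω⟩, z⟩ := p
        simp [Function.update_idem, Function.update_self, Function.update_eq_self] }
    measurable_toFun := aux_measurable_updSwap i
    measurable_invFun := aux_measurable_updSwap i }

end AuxLemmas

/-- Theorem 3.2 (generalization in expectation): if a randomized algorithm `A` is
ε-uniformly stable, then the expected generalization gap over an i.i.d. sample
`S ∼ μⁿ` and the internal randomness of the algorithm is at most ε. -/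
theorem uniform_stability_implies_generalization
    {Z : Type*} [MeasurableSpace Z] (μ : Measure Z) [IsProbabilityMeasure μ]
    {Θ : Type*} [MeasurableSpace Θ]
    {Ω : Type*} [MeasurableSpace Ω] (ν : Measure Ω) [IsProbabilityMeasure ν]
    (n : ℕ) (hn : 0 < n)
    (h : Θ → Z → ℝ) (hmeas : Measurable (Function.uncurry h))
    (A : (Fin n → Z) → Ω → Θ) (hA : Measurable (Function.uncurry A))
    (ε : ℝ)
    -- integrability of the loss of the algorithm output, jointly in (S, ω, z)
    (hInt : Integrable
      (fun p : ((Fin n → Z) × Ω) × Z => h (A p.1.1 p.1.2) p.2)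
      (((Measure.pi fun _ : Fin n => μ).prod ν).prod μ))
    -- integrability of the empirical losses
    (hInt' : ∀ i : Fin n, Integrable
      (fun p : (Fin n → Z) × Ω => h (A p.1 p.2) (p.1 i))
      ((Measure.pi fun _ : Fin n => μ).prod ν))
    -- ε-uniform stability
    (hstab : ∀ S S' : Fin n → Z,
      (∃ j : Fin n, ∀ i : Fin n, i ≠ j → S i = S' i) →
      ∀ z : Z, ∫ ω, (h (A S ω) z - h (A S' ω) z) ∂ν ≤ ε) :
    |∫ S, ∫ ω,
        ((∫ z, h (A S ω) z ∂μ) - (1 / (n : ℝ)) * ∑ i : Fin n, h (A S ω) (S i))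
      ∂ν ∂(Measure.pi fun _ : Fin n => μ)| ≤ ε := by
  obtain ⟨m, rfl⟩ : ∃ m, n = m + 1 := ⟨n - 1, (Nat.succ_pred_eq_of_pos hn).symm⟩
  set P : Measure (Fin (m + 1) → Z) := Measure.pi fun _ : Fin (m + 1) => μ with hP
  haveI : IsProbabilityMeasure P := by rw [hP]; infer_instance
  set ρ : Measure ((Fin (m + 1) → Z) × Ω) := P.prod ν with hρ
  haveI : IsProbabilityMeasure ρ := by rw [hρ]; infer_instance
  set σ : Measure (((Fin (m + 1) → Z) × Ω) × Z) := ρ.prod μ with hσ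
  haveI : IsProbabilityMeasure σ := by rw [hσ]; infer_instance
  -- the stability transformation is measure preserving
  have hTi : ∀ i : Fin (m + 1),
      MeasurePreserving (⇑(updSwapEquiv (Z := Z) (Ω := Ω) i)) σ σ := by
    intro i
    have h1 := aux_swap23 P ν μ
    have h2 := (aux_update μ i).prod (MeasurePreserving.id ν)
    have h3 := aux_swap23 P μ ν
    have hfe : (⇑(updSwapEquiv (Z := Z) (Ω := Ω) i)) =
        ((fun p : ((Fin (m + 1) → Z) × Z) × Ω => ((p.1.1, p.2), p.1.2)) ∘
          Prod.map (fun p : (Fin (m + 1) → Z) × Z =>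
            (Function.update p.1 i p.2, p.1 i)) (id : Ω → Ω) ∘
          (fun p : ((Fin (m + 1) → Z) × Ω) × Z => ((p.1.1, p.2), p.1.2))) := by
      funext p; rfl
    rw [hσ, hρ, hfe]
    exact (h3.comp h2).comp h1
  -- map of fst
  have hmapfst : Measure.map Prod.fst σ = ρ := by
    rw [hσ, Measure.map_fst_prod, measure_univ, one_smul]
  -- integrability and integral identities for the empirical terms
  have hGint : ∀ i : Fin (m + 1), Integrable
      (fun p : ((Fin (m + 1) → Z) × Ω) × Z => h (A p.1.1 p.1.2) (p.1.1 i)) σ := by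
    intro i
    have hm : AEStronglyMeasurable
        (fun q : (Fin (m + 1) → Z) × Ω => h (A q.1 q.2) (q.1 i))
        (Measure.map Prod.fst σ) := by
      rw [hmapfst]; exact (hInt' i).aestronglyMeasurable
    have := (integrable_map_measure hm measurable_fst.aemeasurable).mp
      (by rw [hmapfst]; exact hInt' i)
    exact this
  have hGeq : ∀ i : Fin (m + 1),
      ∫ p, h (A p.1.1 p.1.2) (p.1.1 i) ∂σ = ∫ q, h (A q.1 q.2) (q.1 i) ∂ρ := by
    intro i
    have hm : AEStronglyMeasurable
        (fun q : (Fin (m + 1) → Z) × Ω => h (A q.1 q.2) (q.1 i))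
        (Measure.map Prod.fst σ) := by
      rw [hmapfst]; exact (hInt' i).aestronglyMeasurable
    conv_rhs => rw [← hmapfst]
    rw [integral_map measurable_fst.aemeasurable hm]
  -- transfer through the swap equivalence
  have hHint : ∀ i : Fin (m + 1), Integrable
      (fun p : ((Fin (m + 1) → Z) × Ω) × Z =>
        h (A (Function.update p.1.1 i p.2) p.1.2) p.2) σ := by
    intro i
    have h1 := ((hTi i).integrable_comp_emb
      (updSwapEquiv (Z := Z) (Ω := Ω) i).measurableEmbedding).mpr (hGint i)
    refine h1.congr (Filter.Eventually.of_forall fun p => ?_)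
    show h (A (Function.update p.1.1 i p.2) p.1.2) (Function.update p.1.1 i p.2 i)
      = h (A (Function.update p.1.1 i p.2) p.1.2) p.2
    rw [Function.update_self]
  have hHeq : ∀ i : Fin (m + 1),
      ∫ p, h (A (Function.update p.1.1 i p.2) p.1.2) p.2 ∂σ
        = ∫ p, h (A p.1.1 p.1.2) (p.1.1 i) ∂σ := by
    intro i
    rw [← (hTi i).integral_comp (updSwapEquiv (Z := Z) (Ω := Ω) i).measurableEmbedding
      (fun p => h (A p.1.1 p.1.2) (p.1.1 i))]
    refine integral_congr_ae (Filter.Eventually.of_forall fun p => ?_)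
    show h (A (Function.update p.1.1 i p.2) p.1.2) p.2
      = h (A (Function.update p.1.1 i p.2) p.1.2) (Function.update p.1.1 i p.2 i)
    rw [Function.update_self]
  -- population term
  have hPop : ∫ q, (∫ z, h (A q.1 q.2) z ∂μ) ∂ρ
      = ∫ p, h (A p.1.1 p.1.2) p.2 ∂σ := by
    rw [hσ]
    exact (integral_prod _ (by rw [← hσ]; exact hInt)).symm
  -- integrability of the two risks
  have hPint : Integrable (fun q : (Fin (m + 1) → Z) × Ω => ∫ z, h (A q.1 q.2) z ∂μ) ρ :=
    hInt.integral_prod_left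
  have hEint : Integrable (fun q : (Fin (m + 1) → Z) × Ω =>
      (1 / ((m + 1 : ℕ) : ℝ)) * ∑ i : Fin (m + 1), h (A q.1 q.2) (q.1 i)) ρ :=
    (integrable_finset_sum Finset.univ fun i _ => hInt' i).const_mul _
  -- rewrite the iterated integral over ρ
  have step1 : (∫ S, ∫ ω,
        ((∫ z, h (A S ω) z ∂μ) -
          (1 / ((m + 1 : ℕ) : ℝ)) * ∑ i : Fin (m + 1), h (A S ω) (S i)) ∂ν ∂P)
      = ∫ q, ((∫ z, h (A q.1 q.2) z ∂μ) -
          (1 / ((m + 1 : ℕ) : ℝ)) * ∑ i : Fin (m + 1), h (A q.1 q.2) (q.1 i)) ∂ρ := by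
    rw [hρ]
    exact (integral_prod _ (by rw [← hρ]; exact hPint.sub hEint)).symm
  have step2 : ∫ q, ((∫ z, h (A q.1 q.2) z ∂μ) -
          (1 / ((m + 1 : ℕ) : ℝ)) * ∑ i : Fin (m + 1), h (A q.1 q.2) (q.1 i)) ∂ρ
      = (∫ p, h (A p.1.1 p.1.2) p.2 ∂σ) -
        (1 / ((m + 1 : ℕ) : ℝ)) * ∑ i : Fin (m + 1),
          ∫ p, h (A (Function.update p.1.1 i p.2) p.1.2) p.2 ∂σ := by
    rw [integral_sub hPint hEint, hPop, integral_const_mul,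
      integral_finset_sum Finset.univ fun i _ => hInt' i]
    congr 1
    congr 1
    refine Finset.sum_congr rfl fun i _ => ?_
    rw [← hGeq i, ← hHeq i]
  -- per-coordinate bound via stability
  have hΔ : ∀ i : Fin (m + 1),
      |∫ p, (h (A p.1.1 p.1.2) p.2 -
        h (A (Function.update p.1.1 i p.2) p.1.2) p.2) ∂σ| ≤ ε := by
    intro i
    have hDint : Integrable (fun p : ((Fin (m + 1) → Z) × Ω) × Z =>
        h (A p.1.1 p.1.2) p.2 - h (A (Function.update p.1.1 i p.2) p.1.2) p.2) σ :=
      hInt.sub (hHint i)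
    have hs : MeasurePreserving
        (⇑(swap23Equiv (Fin (m + 1) → Z) Z Ω)) ((P.prod μ).prod ν) σ := by
      rw [hσ, hρ]
      exact aux_swap23 P μ ν
    have hDint' := (hs.integrable_comp_emb
      (swap23Equiv (Fin (m + 1) → Z) Z Ω).measurableEmbedding).mpr hDint
    have e5 := (hs.integral_comp (swap23Equiv (Fin (m + 1) → Z) Z Ω).measurableEmbedding
      (fun p : ((Fin (m + 1) → Z) × Ω) × Z =>
        h (A p.1.1 p.1.2) p.2 - h (A (Function.update p.1.1 i p.2) p.1.2) p.2)).symm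
    have e6 : ∫ p, (h (A p.1.1 p.1.2) p.2 -
          h (A (Function.update p.1.1 i p.2) p.1.2) p.2) ∂σ
        = ∫ x : (Fin (m + 1) → Z) × Z, (∫ ω, (h (A x.1 ω) x.2 -
            h (A (Function.update x.1 i x.2) ω) x.2) ∂ν) ∂(P.prod μ) := by
      rw [e5]
      exact integral_prod _ hDint'
    rw [e6]
    have hbound : ∀ x : (Fin (m + 1) → Z) × Z,
        |∫ ω, (h (A x.1 ω) x.2 - h (A (Function.update x.1 i x.2) ω) x.2) ∂ν| ≤ ε := by
      rintro ⟨S, z⟩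
      have hup := hstab S (Function.update S i z)
        ⟨i, fun j hj => (Function.update_of_ne hj z S).symm⟩ z
      have hdn := hstab (Function.update S i z) S
        ⟨i, fun j hj => Function.update_of_ne hj z S⟩ z
      have hneg : ∫ ω, (h (A (Function.update S i z) ω) z - h (A S ω) z) ∂ν
          = - ∫ ω, (h (A S ω) z - h (A (Function.update S i z) ω) z) ∂ν := by
        rw [← integral_neg]
        congr 1
        funext ω
        ring
      rw [hneg] at hdn
      exact abs_le.mpr ⟨by linarith, hup⟩
    calc ‖∫ x, (∫ ω, (h (A x.1 ω) x.2 -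
            h (A (Function.update x.1 i x.2) ω) x.2) ∂ν) ∂(P.prod μ)‖
        ≤ ε * ((P.prod μ) Set.univ).toReal :=
          norm_integral_le_of_norm_le_const (Filter.Eventually.of_forall fun x => hbound x)
      _ = ε := by
          haveI : IsProbabilityMeasure (P.prod μ) := by infer_instance
          simp
  -- put everything together
  rw [step1, step2]
  have hne : ((m + 1 : ℕ) : ℝ) ≠ 0 := by positivity
  have hsplit : (∫ p, h (A p.1.1 p.1.2) p.2 ∂σ) -
        (1 / ((m + 1 : ℕ) : ℝ)) * ∑ i : Fin (m + 1),
          ∫ p, h (A (Function.update p.1.1 i p.2) p.1.2) p.2 ∂σ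
      = (1 / ((m + 1 : ℕ) : ℝ)) * ∑ i : Fin (m + 1),
          ∫ p, (h (A p.1.1 p.1.2) p.2 -
            h (A (Function.update p.1.1 i p.2) p.1.2) p.2) ∂σ := by
    have hterm : ∀ i ∈ (Finset.univ : Finset (Fin (m + 1))),
        ∫ p, (h (A p.1.1 p.1.2) p.2 -
            h (A (Function.update p.1.1 i p.2) p.1.2) p.2) ∂σ
          = (∫ p, h (A p.1.1 p.1.2) p.2 ∂σ) -
            ∫ p, h (A (Function.update p.1.1 i p.2) p.1.2) p.2 ∂σ :=
      fun i _ => integral_sub hInt (hHint i)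
    rw [Finset.sum_congr rfl hterm, Finset.sum_sub_distrib, mul_sub, Finset.sum_const,
      Finset.card_univ, Fintype.card_fin, nsmul_eq_mul]
    field_simp
  rw [hsplit, abs_mul, abs_of_nonneg (by positivity : (0:ℝ) ≤ 1 / ((m + 1 : ℕ) : ℝ))]
  have h1 := Finset.abs_sum_le_sum_abs
    (fun i : Fin (m + 1) => ∫ p, (h (A p.1.1 p.1.2) p.2 -
      h (A (Function.update p.1.1 i p.2) p.1.2) p.2) ∂σ) Finset.univ
  have h2 : (∑ i : Fin (m + 1), |∫ p, (h (A p.1.1 p.1.2) p.2 -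
      h (A (Function.update p.1.1 i p.2) p.1.2) p.2) ∂σ|) ≤ ∑ _i : Fin (m + 1), ε :=
    Finset.sum_le_sum fun i _ => hΔ i
  have h3 : (∑ _i : Fin (m + 1), ε) = ((m + 1 : ℕ) : ℝ) * ε := by
    rw [Finset.sum_const, Finset.card_univ, Fintype.card_fin, nsmul_eq_mul]
  calc (1 / ((m + 1 : ℕ) : ℝ)) * |∑ i : Fin (m + 1),
        ∫ p, (h (A p.1.1 p.1.2) p.2 -
          h (A (Function.update p.1.1 i p.2) p.1.2) p.2) ∂σ|
      ≤ (1 / ((m + 1 : ℕ) : ℝ)) * (((m + 1 : ℕ) : ℝ) * ε) := by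
        apply mul_le_mul_of_nonneg_left _ (by positivity)
        exact h1.trans (h2.trans_eq h3)
    _ = ε := by field_simp
end

section
/- Let E be a real Hilbert space, Z a real normed space, ε > 0, and g : E × Z → ℝ such that for each z ∈ Z, θ ↦ g(θ,z) is convex, L-Lipschitz and differentiable, ‖∇_θ g(θ1,z) − ∇_θ g(θ2,z)‖ ≤ L_θ‖θ1 − θ2‖ for all z, and ‖∇_θ g(θ,z1) − ∇_θ g(θ,z2)‖ ≤ L_z‖z1 − z2‖ for all θ. Define the adversarial loss h(θ,z) = sup_{‖z' − z‖ ≤ ε} g(θ,z'), and assume for each z that θ ↦ h(θ,z) is differentiable with ∇_θ h(θ,z) = ∇_θ g(θ, a(θ,z)) where a(θ,z) is a maximizer of g(θ,·) over the closed ε-ball around z. Let S, S' ∈ Zⁿ differ in exactly one coordinate and run SGD on h with step sizes 0 < α_t ≤ 1/L_θ from a common initialization, with trajectories indexed by i ∈ (Fin n)^T as θ_S^{t+1}(i) = θ_S^t(i) − α_{t+1}∇_θ h(θ_S^t(i), S_{i_{t+1}}). Then for every z ∈ Z, n^{−T} ∑_{i ∈ (Fin n)^T} |h(θ_S^T(i),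 z) − h(θ_{S'}^T(i), z)| ≤ (2 L L_z ε + 2L²/n) ∑_{t=1}^T α_t. -/
/-!
For a convex loss whose gradient is `Lθ`-Lipschitz, co-coercivity
`‖∇f x - ∇f y‖² / (2 Lθ) ≤ ⟪∇f x - ∇f y, x - y⟫` makes a gradient step of size `α ≤ 1 / Lθ`
nonexpansive. The adversarial gradient `∇_θ g(y, a(y, z))` differs from the gradient at `y` of the
convex function `g(·, a(x, z))` by at most `Lz ‖a(x, z) - a(y, z)‖ ≤ 2 Lz ε`, so on a shared sample
the two SGD runs drift apart by at most `2 α_t Lz ε` per step, and on the differing sample, drawn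
with probability `1 / n`, by at most `2 α_t L`. The adversarial loss is `L`-Lipschitz in `θ`, being
a maximum of `L`-Lipschitz functions, so it remains to sum these drifts.
-/

open Finset
open scoped RealInnerProductSpace

section SmoothConvex

variable {E : Type*} [NormedAddCommGroup E] [InnerProductSpace ℝ E] [CompleteSpace E]
  {f : E → ℝ} {f' : E → E}

theorem HasGradientAt.norm_le_of_lip {x g : E} {L : ℝ} (hf : HasGradientAt f g x) (hL : 0 ≤ L)
    (hlip : ∀ u v, |f u - f v| ≤ L * ‖u - v‖) : ‖g‖ ≤ L := by
  simpa using hf.hasFDerivAt.le_of_lip' hL (.of_forall fun u => hlip u x)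

theorem ConvexOn.add_inner_le_of_hasGradientAt_s11 (hconv : ConvexOn ℝ Set.univ f)
    (hgrad : ∀ x, HasGradientAt f (f' x) x) (x y : E) :
    f x + ⟪f' x, y - x⟫ ≤ f y := by
  set φ : ℝ → ℝ := fun t => f (AffineMap.lineMap x y t)
  have hφ : HasDerivAt φ ⟪f' x, y - x⟫ 0 := by
    have hline : HasDerivAt (fun t : ℝ => AffineMap.lineMap x y t) (y - x) 0 := by
      simpa using AffineMap.hasDerivAt_lineMap (a := x) (b := y) (x := (0 : ℝ))
    have := (hgrad x).hasFDerivAt.comp_hasDerivAt_of_eq 0 hline (by simp)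
    rwa [InnerProductSpace.toDual_apply_apply] at this
  have hslope := (hconv.comp_affineMap (AffineMap.lineMap x y)).le_slope_of_hasDerivAt
    (Set.mem_univ 0) (Set.mem_univ 1) one_pos hφ
  simp only [slope_def_field, Function.comp_apply, AffineMap.lineMap_apply_one,
    AffineMap.lineMap_apply_zero, sub_zero, div_one] at hslope
  linarith

theorem le_add_inner_add_mul_sq_of_hasGradientAt {Lθ : ℝ} (hLθ : 0 ≤ Lθ)
    (hgrad : ∀ x, HasGradientAt f (f' x) x) (hlip : ∀ u v, ‖f' u - f' v‖ ≤ Lθ * ‖u - v‖)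
    (x y : E) : f y ≤ f x + ⟪f' x, y - x⟫ + Lθ * ‖y - x‖ ^ 2 := by
  have hbound : ∀ z ∈ Metric.closedBall x ‖y - x‖, ‖InnerProductSpace.toDual ℝ E (f' z) -
      InnerProductSpace.toDual ℝ E (f' x)‖ ≤ Lθ * ‖y - x‖ := by
    intro z hz
    rw [← map_sub, LinearIsometryEquiv.norm_map]
    exact (hlip z x).trans (mul_le_mul_of_nonneg_left (mem_closedBall_iff_norm.mp hz) hLθ)
  have hmvt := (convex_closedBall x ‖y - x‖).norm_image_sub_le_of_norm_hasFDerivWithin_le'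
    (fun z _ => (hgrad z).hasFDerivAt.hasFDerivWithinAt) hbound
    (Metric.mem_closedBall_self (norm_nonneg _)) (mem_closedBall_iff_norm.mpr le_rfl)
  rw [InnerProductSpace.toDual_apply_apply, Real.norm_eq_abs] at hmvt
  linarith [(abs_le.mp hmvt).2, sq (‖y - x‖)]

theorem ConvexOn.add_inner_add_norm_sq_le {Lθ : ℝ} (hLθ : 0 < Lθ) (hconv : ConvexOn ℝ Set.univ f)
    (hgrad : ∀ x, HasGradientAt f (f' x) x) (hlip : ∀ u v, ‖f' u - f' v‖ ≤ Lθ * ‖u - v‖)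
    (x y : E) : f x + ⟪f' x, y - x⟫ + ‖f' y - f' x‖ ^ 2 / (4 * Lθ) ≤ f y := by
  set d := f' y - f' x
  -- `w` is the step from `y` of size `1 / (2 Lθ)` along the gradient of `f - ⟪f' x, ·⟫`,
  -- a convex function minimized at `x`.
  set w := y - (2 * Lθ)⁻¹ • d
  have hbelow := hconv.add_inner_le_of_hasGradientAt_s11 hgrad x w
  have habove := le_add_inner_add_mul_sq_of_hasGradientAt hLθ.le hgrad hlip y w
  have hsplit : ⟪f' x, w - x⟫ = ⟪f' x, y - x⟫ + ⟪f' x, w - y⟫ := by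
    rw [← inner_add_right, add_comm, sub_add_sub_cancel]
  have hd := inner_sub_left (𝕜 := ℝ) (f' y) (f' x) (w - y)
  have hwy : w - y = -((2 * Lθ)⁻¹ • d) := sub_sub_cancel_left _ _
  have hinner : ⟪d, w - y⟫ = -((2 * Lθ)⁻¹ * ‖d‖ ^ 2) := by
    rw [hwy, inner_neg_right, real_inner_smul_right, real_inner_self_eq_norm_sq]
  have hnorm : Lθ * ‖w - y‖ ^ 2 = ‖d‖ ^ 2 / (4 * Lθ) := by
    rw [hwy, norm_neg, norm_smul, Real.norm_of_nonneg (by positivity)]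
    field_simp
    ring
  have hhalf : (2 * Lθ)⁻¹ * ‖d‖ ^ 2 = 2 * (‖d‖ ^ 2 / (4 * Lθ)) := by
    field_simp
    ring
  linarith

theorem ConvexOn.norm_sq_div_le_inner_sub {Lθ : ℝ} (hLθ : 0 < Lθ) (hconv : ConvexOn ℝ Set.univ f)
    (hgrad : ∀ x, HasGradientAt f (f' x) x) (hlip : ∀ u v, ‖f' u - f' v‖ ≤ Lθ * ‖u - v‖)
    (x y : E) : ‖f' x - f' y‖ ^ 2 / (2 * Lθ) ≤ ⟪f' x - f' y, x - y⟫ := by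
  have hxy := hconv.add_inner_add_norm_sq_le hLθ hgrad hlip x y
  have hyx := hconv.add_inner_add_norm_sq_le hLθ hgrad hlip y x
  rw [norm_sub_rev] at hxy
  have hsum : ⟪f' x - f' y, x - y⟫ = -⟪f' x, y - x⟫ - ⟪f' y, x - y⟫ := by
    rw [inner_sub_left, ← inner_neg_right, neg_sub]
  have hhalf : ‖f' x - f' y‖ ^ 2 / (2 * Lθ) = 2 * (‖f' x - f' y‖ ^ 2 / (4 * Lθ)) := by
    field_simp
    ring
  linarith

theorem ConvexOn.norm_sub_smul_sub_sub_smul_le {Lθ α : ℝ} (hLθ : 0 < Lθ)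
    (hconv : ConvexOn ℝ Set.univ f) (hgrad : ∀ x, HasGradientAt f (f' x) x)
    (hlip : ∀ u v, ‖f' u - f' v‖ ≤ Lθ * ‖u - v‖) (hα0 : 0 ≤ α) (hα1 : α ≤ 1 / Lθ) (x y : E) :
    ‖(x - α • f' x) - (y - α • f' y)‖ ≤ ‖x - y‖ := by
  set d := f' x - f' y
  have hcoco := hconv.norm_sq_div_le_inner_sub hLθ hgrad hlip x y
  have hαsq : α ^ 2 * ‖d‖ ^ 2 ≤ 2 * α * (‖d‖ ^ 2 / (2 * Lθ)) := by
    have : α ^ 2 ≤ α / Lθ := by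
      rw [sq, ← mul_one_div]
      exact mul_le_mul_of_nonneg_left hα1 hα0
    calc α ^ 2 * ‖d‖ ^ 2 ≤ α / Lθ * ‖d‖ ^ 2 := by gcongr
      _ = 2 * α * (‖d‖ ^ 2 / (2 * Lθ)) := by field_simp
  have hsq : ‖(x - y) - α • d‖ ^ 2 ≤ ‖x - y‖ ^ 2 := by
    rw [norm_sub_sq_real, real_inner_smul_right, real_inner_comm, norm_smul,
      Real.norm_of_nonneg hα0, mul_pow]
    nlinarith
  calc ‖(x - α • f' x) - (y - α • f' y)‖ = ‖(x - y) - α • d‖ := by congr 1; module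
    _ ≤ ‖x - y‖ := (sq_le_sq₀ (norm_nonneg _) (norm_nonneg _)).mp hsq

end SmoothConvex

theorem IsMaxOn.csSup_image_eq {X Y : Type*} [ConditionallyCompleteLattice Y] {f : X → Y}
    {s : Set X} {a : X} (hmax : IsMaxOn f s a) (ha : a ∈ s) : sSup (f '' s) = f a :=
  IsGreatest.csSup_eq ⟨Set.mem_image_of_mem f ha, by rintro _ ⟨x, hx, rfl⟩; exact hmax hx⟩

theorem abs_sub_le_of_isMaxOn {X Y : Type*} [SeminormedAddCommGroup X] {g : X → Y → ℝ}
    {s : Set Y} {a : X → Y} {L : ℝ}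
    (hlip : ∀ z θ1 θ2, |g θ1 z - g θ2 z| ≤ L * ‖θ1 - θ2‖) (hmem : ∀ θ, a θ ∈ s)
    (hmax : ∀ θ, IsMaxOn (g θ) s (a θ)) (θ1 θ2 : X) :
    |g θ1 (a θ1) - g θ2 (a θ2)| ≤ L * ‖θ1 - θ2‖ := by
  have h12 := (abs_le.mp (hlip (a θ1) θ1 θ2)).2
  have h21 := (abs_le.mp (hlip (a θ2) θ2 θ1)).2
  rw [norm_sub_rev] at h21
  rw [abs_sub_le_iff]
  constructor
  · linarith [isMaxOn_iff.mp (hmax θ2) _ (hmem θ1)]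
  · linarith [isMaxOn_iff.mp (hmax θ1) _ (hmem θ2)]

theorem norm_sub_smul_sub_sub_smul_le_add {E : Type*} [SeminormedAddCommGroup E] [NormedSpace ℝ E]
    (x y u v : E) {α : ℝ} (hα : 0 ≤ α) :
    ‖(x - α • u) - (y - α • v)‖ ≤ ‖x - y‖ + α * (‖u‖ + ‖v‖) := by
  calc ‖(x - α • u) - (y - α • v)‖ = ‖(x - y) - α • (u - v)‖ := by congr 1; module
    _ ≤ ‖x - y‖ + α * ‖u - v‖ := by
      refine (norm_sub_le _ _).trans_eq ?_
      rw [norm_smul, Real.norm_of_nonneg hα]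
    _ ≤ ‖x - y‖ + α * (‖u‖ + ‖v‖) := by gcongr; exact norm_sub_le u v

theorem norm_sub_smul_adversarial_sub_le {E Z : Type*} [NormedAddCommGroup E]
    [InnerProductSpace ℝ E] [CompleteSpace E] [SeminormedAddCommGroup Z]
    {g : E → Z → ℝ} {Dg : E → Z → E} {a : E → Z} {z : Z} {Lθ Lz ε α : ℝ}
    (hLθ : 0 < Lθ) (hLz : 0 ≤ Lz)
    (hconv : ∀ z, ConvexOn ℝ Set.univ (fun θ => g θ z))
    (hgrad : ∀ z θ, HasGradientAt (fun θ' => g θ' z) (Dg θ z) θ)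
    (hDθ : ∀ z θ1 θ2, ‖Dg θ1 z - Dg θ2 z‖ ≤ Lθ * ‖θ1 - θ2‖)
    (hDz : ∀ θ z1 z2, ‖Dg θ z1 - Dg θ z2‖ ≤ Lz * ‖z1 - z2‖)
    (ha : ∀ θ, a θ ∈ Metric.closedBall z ε) (hα0 : 0 ≤ α) (hα1 : α ≤ 1 / Lθ) (x y : E) :
    ‖(x - α • Dg x (a x)) - (y - α • Dg y (a y))‖ ≤ ‖x - y‖ + α * (2 * Lz * ε) := by
  have hstep := (hconv (a x)).norm_sub_smul_sub_sub_smul_le hLθ (hgrad (a x)) (hDθ (a x))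
    hα0 hα1 x y
  have hattack : ‖Dg y (a y) - Dg y (a x)‖ ≤ 2 * Lz * ε :=
    calc ‖Dg y (a y) - Dg y (a x)‖ ≤ Lz * dist (a y) (a x) :=
          dist_eq_norm (a y) (a x) ▸ hDz y _ _
      _ ≤ Lz * (ε + ε) := by
          gcongr
          exact (dist_triangle_right _ _ z).trans (add_le_add (ha y) (ha x))
      _ = 2 * Lz * ε := by ring
  calc ‖(x - α • Dg x (a x)) - (y - α • Dg y (a y))‖
      = ‖((x - α • Dg x (a x)) - (y - α • Dg y (a x))) + α • (Dg y (a y) - Dg y (a x))‖ := by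
        congr 1; module
    _ ≤ ‖x - y‖ + α * (2 * Lz * ε) := by
      refine (norm_add_le _ _).trans (add_le_add hstep ?_)
      rw [norm_smul, Real.norm_of_nonneg hα0]
      gcongr

theorem Fin.sum_univ_val_add_one_eq_sum_Icc {M : Type*} [AddCommMonoid M] (T : ℕ) (f : ℕ → M) :
    ∑ t : Fin T, f (t + 1) = ∑ t ∈ Icc 1 T, f t := by
  rw [Fin.sum_univ_eq_sum_range (fun t => f (t + 1)), range_eq_Ico, sum_Ico_add' f,
    zero_add, Ico_add_one_right_eq_Icc]

theorem Fintype.sum_ite_apply_eq {ι β : Type*} [Fintype ι] [DecidableEq ι] [Fintype β]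
    [DecidableEq β] (k : ι) (b : β) :
    ∑ i : ι → β, (if i k = b then (1 : ℝ) else 0) =
      (Fintype.card β : ℝ) ^ Fintype.card ι / Fintype.card β := by
  have : Nonempty β := ⟨b⟩
  rw [sum_boole, ← Fintype.piFinset_univ,
    Fintype.card_filter_piFinset_const_eq_of_mem _ _ (mem_univ b), card_univ, Nat.cast_pow,
    pow_sub₀ _ (Nat.cast_ne_zero.mpr Fintype.card_ne_zero) (Fintype.card_pos_iff.mpr ⟨k⟩), pow_one,
    div_eq_mul_inv]

theorem average_norm_sub_le_of_norm_sub_succ_le {E : Type*} [SeminormedAddCommGroup E]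
    {n T : ℕ} (j : Fin n) {x y : (Fin T → Fin n) → ℕ → E} {α : ℕ → ℝ} {A B : ℝ}
    (h0 : ∀ i, x i 0 = y i 0)
    (hstep : ∀ i (t : Fin T), ‖x i (t + 1) - y i (t + 1)‖ ≤
      ‖x i t - y i t‖ + α (t + 1) * (A + B * if i t = j then 1 else 0)) :
    1 / (n : ℝ) ^ T * ∑ i, ‖x i T - y i T‖ ≤ (A + B / n) * ∑ t ∈ Icc 1 T, α t := by
  set c : (Fin T → Fin n) → Fin T → ℝ := fun i t => α (t + 1) * (A + B * if i t = j then 1 else 0)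
  have htelescope : ∀ i, ‖x i T - y i T‖ ≤ ∑ t, c i t := by
    intro i
    have := Fin.sum_univ_eq_sum_range (fun m => ‖x i (m + 1) - y i (m + 1)‖ - ‖x i m - y i m‖) T
    rw [sum_range_sub (fun m => ‖x i m - y i m‖), h0, sub_self, norm_zero, sub_zero] at this
    rw [← this]
    exact sum_le_sum fun t _ => sub_le_iff_le_add'.mpr (hstep i t)
  have hn : (n : ℝ) ≠ 0 := Nat.cast_ne_zero.mpr (Fin.pos j).ne'
  have haverage : ∀ t, 1 / (n : ℝ) ^ T * ∑ i, c i t = α (t + 1) * (A + B / n) := by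
    intro t
    have hcount := Fintype.sum_ite_apply_eq t j
    simp only [Fintype.card_fin] at hcount
    simp only [c, mul_add, sum_add_distrib, ← mul_sum, sum_const, card_univ, Fintype.card_fun,
      Fintype.card_fin, nsmul_eq_mul, hcount]
    field_simp
    push_cast
    ring
  calc 1 / (n : ℝ) ^ T * ∑ i, ‖x i T - y i T‖
      ≤ 1 / (n : ℝ) ^ T * ∑ i, ∑ t, c i t := by gcongr with i; exact htelescope i
    _ = ∑ t : Fin T, α (t + 1) * (A + B / n) := by
      rw [sum_comm, mul_sum]
      exact sum_congr rfl fun t _ => haverage t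
    _ = (A + B / n) * ∑ t ∈ Icc 1 T, α t := by
      rw [← sum_mul, Fin.sum_univ_val_add_one_eq_sum_Icc, mul_comm]

theorem adversarial_training_uniform_stability_general
    {E : Type*} [NormedAddCommGroup E] [InnerProductSpace ℝ E] [CompleteSpace E]
    {Z : Type*} [NormedAddCommGroup Z]
    (ε : ℝ) (hε : 0 < ε)
    (g : E → Z → ℝ) (Dg : E → Z → E) (L Lθ Lz : ℝ)
    (hL : 0 ≤ L) (hLθ : 0 < Lθ) (hLz : 0 ≤ Lz)
    (hconv : ∀ z : Z, ConvexOn ℝ Set.univ (fun θ => g θ z))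
    (hgLip : ∀ (z : Z) (θ1 θ2 : E), |g θ1 z - g θ2 z| ≤ L * ‖θ1 - θ2‖)
    (hgrad : ∀ (z : Z) (θ : E), HasGradientAt (fun θ' => g θ' z) (Dg θ z) θ)
    (hDθ : ∀ (z : Z) (θ1 θ2 : E), ‖Dg θ1 z - Dg θ2 z‖ ≤ Lθ * ‖θ1 - θ2‖)
    (hDz : ∀ (θ : E) (z1 z2 : Z), ‖Dg θ z1 - Dg θ z2‖ ≤ Lz * ‖z1 - z2‖)
    -- the adversarial loss
    (h : E → Z → ℝ)
    (hdef : ∀ (θ : E) (z : Z),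
      h θ z = sSup ((fun z' => g θ z') '' Metric.closedBall z ε))
    -- `a θ z` is a maximizer of `g θ ·` over the closed ε-ball around z
    (a : E → Z → Z)
    (ha : ∀ (θ : E) (z : Z), a θ z ∈ Metric.closedBall z ε ∧
      ∀ z' ∈ Metric.closedBall z ε, g θ z' ≤ g θ (a θ z))
    (n T : ℕ)
    (S S' : Fin n → Z)
    (hdiff : ∃ j : Fin n, S j ≠ S' j ∧ ∀ i : Fin n, i ≠ j → S i = S' i)
    (θ0 : E) (α : ℕ → ℝ)
    (hα : ∀ t : ℕ, 1 ≤ t → t ≤ T → 0 < α t ∧ α t ≤ 1 / Lθ)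
    (θS θS' : (Fin T → Fin n) → ℕ → E)
    (hinitS : ∀ i, θS i 0 = θ0) (hinitS' : ∀ i, θS' i 0 = θ0)
    (hstepS : ∀ (i : Fin T → Fin n) (t : Fin T),
      θS i (t.val + 1) =
        θS i t.val - α (t.val + 1) • Dg (θS i t.val) (a (θS i t.val) (S (i t))))
    (hstepS' : ∀ (i : Fin T → Fin n) (t : Fin T),
      θS' i (t.val + 1) =
        θS' i t.val - α (t.val + 1) • Dg (θS' i t.val) (a (θS' i t.val) (S' (i t)))) :
    ∀ z : Z,
      (1 / (n : ℝ) ^ T) * ∑ i : Fin T → Fin n, |h (θS i T) z - h (θS' i T) z| ≤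
        (2 * L * Lz * ε + 2 * L ^ 2 / n) * ∑ t ∈ Finset.Icc 1 T, α t := by
  intro z
  obtain ⟨j, -, hS⟩ := hdiff
  have hmax : ∀ θ z, IsMaxOn (g θ) (Metric.closedBall z ε) (a θ z) :=
    fun θ z => isMaxOn_iff.mpr (ha θ z).2
  have hval : ∀ θ z, h θ z = g θ (a θ z) :=
    fun θ z => (hdef θ z).trans ((hmax θ z).csSup_image_eq (ha θ z).1)
  have hDg : ∀ θ z, ‖Dg θ z‖ ≤ L := fun θ z => (hgrad z θ).norm_le_of_lip hL (hgLip z)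
  have hstep : ∀ i (t : Fin T), ‖θS i (t + 1) - θS' i (t + 1)‖ ≤ ‖θS i t - θS' i t‖ +
      α (t + 1) * (2 * Lz * ε + 2 * L * if i t = j then 1 else 0) := by
    intro i t
    obtain ⟨hα0, hα1⟩ := hα (t + 1) (by omega) (by omega)
    rw [hstepS, hstepS']
    split_ifs with hj
    · refine (norm_sub_smul_sub_sub_smul_le_add _ _ _ _ hα0.le).trans (add_le_add_right ?_ _)
      refine mul_le_mul_of_nonneg_left ?_ hα0.le
      linarith [hDg (θS i t) (a (θS i t) (S (i t))), hDg (θS' i t) (a (θS' i t) (S' (i t))),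
        mul_nonneg hLz hε.le]
    · rw [← hS _ hj, mul_zero, add_zero]
      exact norm_sub_smul_adversarial_sub_le hLθ hLz hconv hgrad hDθ hDz
        (fun θ => (ha θ (S (i t))).1) hα0.le hα1 _ _
  calc 1 / (n : ℝ) ^ T * ∑ i, |h (θS i T) z - h (θS' i T) z|
      ≤ 1 / (n : ℝ) ^ T * ∑ i, L * ‖θS i T - θS' i T‖ := by
        gcongr with i
        simpa only [hval] using abs_sub_le_of_isMaxOn hgLip (fun θ => (ha θ z).1)
          (fun θ => hmax θ z) (θS i T) (θS' i T)
    _ ≤ L * ((2 * Lz * ε + 2 * L / n) * ∑ t ∈ Icc 1 T, α t) := by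
        rw [← mul_sum, mul_left_comm]
        exact mul_le_mul_of_nonneg_left (average_norm_sub_le_of_norm_sub_succ_le j
          (fun i => (hinitS i).trans (hinitS' i).symm) hstep) hL
    _ = (2 * L * Lz * ε + 2 * L ^ 2 / n) * ∑ t ∈ Icc 1 T, α t := by ring

/-- Corollary 5.2 (exact attacks): uniform stability of adversarial training with SGD.
The adversarial loss `h θ z = sup_{‖z' - z‖ ≤ ε} g θ z'` is run through SGD with
step sizes `α_t ≤ 1/L_θ`; the resulting uniform stability parameter is
`(2 L L_z ε + 2L²/n) ∑ α_t`. -/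
theorem adversarial_training_uniform_stability
    {E : Type*} [NormedAddCommGroup E] [InnerProductSpace ℝ E] [CompleteSpace E]
    {Z : Type*} [NormedAddCommGroup Z] [NormedSpace ℝ Z]
    (ε : ℝ) (hε : 0 < ε)
    (g : E → Z → ℝ) (Dg : E → Z → E) (L Lθ Lz : ℝ)
    (hL : 0 ≤ L) (hLθ : 0 < Lθ) (hLz : 0 ≤ Lz)
    (hconv : ∀ z : Z, ConvexOn ℝ Set.univ (fun θ => g θ z))
    (hgLip : ∀ (z : Z) (θ1 θ2 : E), |g θ1 z - g θ2 z| ≤ L * ‖θ1 - θ2‖)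
    (hgrad : ∀ (z : Z) (θ : E), HasGradientAt (fun θ' => g θ' z) (Dg θ z) θ)
    (hDθ : ∀ (z : Z) (θ1 θ2 : E), ‖Dg θ1 z - Dg θ2 z‖ ≤ Lθ * ‖θ1 - θ2‖)
    (hDz : ∀ (θ : E) (z1 z2 : Z), ‖Dg θ z1 - Dg θ z2‖ ≤ Lz * ‖z1 - z2‖)
    -- the adversarial loss
    (h : E → Z → ℝ)
    (hdef : ∀ (θ : E) (z : Z),
      h θ z = sSup ((fun z' => g θ z') '' Metric.closedBall z ε))
    -- `a θ z` is a maximizer of `g θ ·` over the closed ε-ball around z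
    (a : E → Z → Z)
    (ha : ∀ (θ : E) (z : Z), a θ z ∈ Metric.closedBall z ε ∧
      ∀ z' ∈ Metric.closedBall z ε, g θ z' ≤ g θ (a θ z))
    -- `θ ↦ h θ z` is differentiable with gradient `Dg θ (a θ z)` (Danskin)
    (hgradh : ∀ (z : Z) (θ : E),
      HasGradientAt (fun θ' => h θ' z) (Dg θ (a θ z)) θ)
    (n T : ℕ) (hn : 0 < n) (hT : 0 < T)
    (S S' : Fin n → Z)
    (hdiff : ∃ j : Fin n, S j ≠ S' j ∧ ∀ i : Fin n, i ≠ j → S i = S' i)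
    (θ0 : E) (α : ℕ → ℝ)
    (hα : ∀ t : ℕ, 1 ≤ t → t ≤ T → 0 < α t ∧ α t ≤ 1 / Lθ)
    (θS θS' : (Fin T → Fin n) → ℕ → E)
    (hinitS : ∀ i, θS i 0 = θ0) (hinitS' : ∀ i, θS' i 0 = θ0)
    (hstepS : ∀ (i : Fin T → Fin n) (t : Fin T),
      θS i (t.val + 1) =
        θS i t.val - α (t.val + 1) • Dg (θS i t.val) (a (θS i t.val) (S (i t))))
    (hstepS' : ∀ (i : Fin T → Fin n) (t : Fin T),
      θS' i (t.val + 1) =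
        θS' i t.val - α (t.val + 1) • Dg (θS' i t.val) (a (θS' i t.val) (S' (i t)))) :
    ∀ z : Z,
      (1 / (n : ℝ) ^ T) * ∑ i : Fin T → Fin n, |h (θS i T) z - h (θS' i T) z| ≤
        (2 * L * Lz * ε + 2 * L ^ 2 / n) * ∑ t ∈ Finset.Icc 1 T, α t :=
  adversarial_training_uniform_stability_general ε hε g Dg L Lθ Lz hL hLθ hLz hconv hgLip hgrad hDθ
    hDz h hdef a ha n T S S' hdiff θ0 α hα θS θS' hinitS hinitS' hstepS hstepS'
end

section
/- Let E and Z be real Hilbert spaces, C ⊆ Z nonempty and convex, μ > 0, and g : E × Z → ℝ. Assume: (i) for each θ, the map z ↦ g(θ,z) is differentiable and μ-strongly concave on C, i.e. for all z1,z2 ∈ C, ⟪∇_z g(θ,z1) − ∇_z g(θ,z2), z1 − z2⟫ ≤ −μ‖z1 − z2‖²; (ii) ‖∇_θ g(θ1,z) − ∇_θ g(θ2,z)‖ ≤ L_θ‖θ1 − θ2‖; (iii) ‖∇_θ g(θ,z1) − ∇_θ g(θ,z2)‖ ≤ L_z‖z1 − z2‖; (iv) ‖∇_z g(θ1,z) −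 ∇_z g(θ2,z)‖ ≤ L_{zθ}‖θ1 − θ2‖. Let z* : E → C assign to each θ a maximizer of g(θ,·) over C. Then: (a) ‖z*(θ1) − z*(θ2)‖ ≤ (L_{zθ}/μ)‖θ1 − θ2‖ for all θ1, θ2; and (b) the map θ ↦ ∇_θ g(θ, z*(θ)) is β₂-Lipschitz with β₂ = L_z L_{zθ}/μ + L_θ, so that if h(θ) = max_{z ∈ C} g(θ,z) is differentiable with ∇h(θ) = ∇_θ g(θ, z*(θ)), then h is β₂-gradient Lipschitz. -/
open RealInnerProductSpace

/-- First-order condition at a maximizer over a convex set. -/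
lemma foc_aux {Z : Type*} [NormedAddCommGroup Z] [InnerProductSpace ℝ Z] [CompleteSpace Z]
    {C : Set Z} (hCconv : Convex ℝ C) {f : Z → ℝ} {f' : Z} {a : Z}
    (hf : HasGradientAt f f' a) (ha : a ∈ C) (hmax : ∀ z ∈ C, f z ≤ f a)
    {z : Z} (hz : z ∈ C) : ⟪f', z - a⟫ ≤ 0 := by
  have hfd := hf.hasFDerivAt.hasFDerivWithinAt (s := C)
  have hmax' : IsLocalMaxOn f C a := (isMaxOn_iff.mpr hmax).localize
  have hcone : z - a ∈ posTangentConeAt C a :=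
    sub_mem_posTangentConeAt_of_segment_subset (hCconv.segment_subset ha hz)
  have h := hmax'.hasFDerivWithinAt_nonpos hfd hcone
  simpa [InnerProductSpace.toDual_apply_apply] using h

/-- Appendix Lemma B.3: when the inner maximization is μ-strongly concave, the
maximizer `z*` is `(L_zθ/μ)`-Lipschitz in θ, and `θ ↦ ∇_θ g(θ, z*(θ))` is
Lipschitz with constant `β₂ = L_z L_zθ/μ + L_θ`, so the adversarial surrogate loss
is genuinely gradient Lipschitz. -/
theorem strongly_concave_inner_max_smooth
    {E : Type*} [NormedAddCommGroup E] [InnerProductSpace ℝ E] [CompleteSpace E]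
    {Z : Type*} [NormedAddCommGroup Z] [InnerProductSpace ℝ Z] [CompleteSpace Z]
    (C : Set Z) (hCne : C.Nonempty) (hCconv : Convex ℝ C)
    (μ : ℝ) (hμ : 0 < μ)
    (g : E → Z → ℝ) (Dθ : E → Z → E) (Dz : E → Z → Z)
    (Lθ Lz Lzθ : ℝ) (hLθ : 0 ≤ Lθ) (hLz : 0 ≤ Lz) (hLzθ : 0 ≤ Lzθ)
    -- (i) z ↦ g(θ, z) is differentiable with gradient Dz θ · and μ-strongly concave on C
    (hgradz : ∀ (θ : E) (z : Z), HasGradientAt (fun z' => g θ z') (Dz θ z) z)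
    (hsconc : ∀ (θ : E), ∀ z1 ∈ C, ∀ z2 ∈ C,
      ⟪Dz θ z1 - Dz θ z2, z1 - z2⟫ ≤ -μ * ‖z1 - z2‖ ^ 2)
    -- (ii)–(iv) Lipschitz gradients
    (hDθθ : ∀ (z : Z) (θ1 θ2 : E), ‖Dθ θ1 z - Dθ θ2 z‖ ≤ Lθ * ‖θ1 - θ2‖)
    (hDθz : ∀ (θ : E) (z1 z2 : Z), ‖Dθ θ z1 - Dθ θ z2‖ ≤ Lz * ‖z1 - z2‖)
    (hDzθ : ∀ (z : Z) (θ1 θ2 : E), ‖Dz θ1 z - Dz θ2 z‖ ≤ Lzθ * ‖θ1 - θ2‖)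
    -- z* assigns to each θ a maximizer of g(θ, ·) over C
    (zstar : E → Z)
    (hzstar : ∀ θ : E, zstar θ ∈ C ∧ ∀ z ∈ C, g θ z ≤ g θ (zstar θ)) :
    (∀ θ1 θ2 : E, ‖zstar θ1 - zstar θ2‖ ≤ (Lzθ / μ) * ‖θ1 - θ2‖) ∧
    (∀ θ1 θ2 : E, ‖Dθ θ1 (zstar θ1) - Dθ θ2 (zstar θ2)‖ ≤
      (Lz * Lzθ / μ + Lθ) * ‖θ1 - θ2‖) := by
  have key : ∀ θ1 θ2 : E, ‖zstar θ1 - zstar θ2‖ ≤ (Lzθ / μ) * ‖θ1 - θ2‖ := by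
    intro θ1 θ2
    set z1 := zstar θ1
    set z2 := zstar θ2
    obtain ⟨hz1C, hmax1⟩ := hzstar θ1
    obtain ⟨hz2C, hmax2⟩ := hzstar θ2
    set d := z1 - z2 with hd
    -- FOCs
    have foc1 : ⟪Dz θ1 z1, z2 - z1⟫ ≤ 0 :=
      foc_aux hCconv (hgradz θ1 z1) hz1C hmax1 hz2C
    have foc2 : ⟪Dz θ2 z2, z1 - z2⟫ ≤ 0 :=
      foc_aux hCconv (hgradz θ2 z2) hz2C hmax2 hz1C
    have hsc := hsconc θ1 z1 hz1C z2 hz2C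
    -- μ‖d‖² ≤ ⟪Dz θ1 z2 - Dz θ2 z2, d⟫
    have h1 : μ * ‖d‖ ^ 2 ≤ ⟪Dz θ1 z2 - Dz θ2 z2, d⟫ := by
      have e1 : ⟪Dz θ1 z1 - Dz θ1 z2, d⟫ =
          ⟪Dz θ1 z1, d⟫ - ⟪Dz θ1 z2, d⟫ := by rw [inner_sub_left]
      have e2 : ⟪Dz θ1 z2 - Dz θ2 z2, d⟫ =
          ⟪Dz θ1 z2, d⟫ - ⟪Dz θ2 z2, d⟫ := by rw [inner_sub_left]
      have foc1' : 0 ≤ ⟪Dz θ1 z1, d⟫ := by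
        have h := foc1
        rw [show z2 - z1 = -(z1 - z2) by abel, inner_neg_right] at h
        rw [hd]; linarith
      nlinarith [foc2, hsc, e1, e2]
    have h2 : ⟪Dz θ1 z2 - Dz θ2 z2, d⟫ ≤ Lzθ * ‖θ1 - θ2‖ * ‖d‖ := by
      calc ⟪Dz θ1 z2 - Dz θ2 z2, d⟫ ≤ ‖Dz θ1 z2 - Dz θ2 z2‖ * ‖d‖ :=
            real_inner_le_norm _ _
        _ ≤ Lzθ * ‖θ1 - θ2‖ * ‖d‖ := by
            gcongr; exacts [hDzθ z2 θ1 θ2]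
    rcases eq_or_lt_of_le (norm_nonneg d) with h0 | h0
    · rw [hd] at h0
      rw [hd, ← h0]
      positivity
    · have : μ * ‖d‖ ≤ Lzθ * ‖θ1 - θ2‖ := by nlinarith
      rw [hd] at this ⊢
      rw [div_mul_eq_mul_div, le_div_iff₀ hμ]
      linarith
  refine ⟨key, fun θ1 θ2 => ?_⟩
  calc ‖Dθ θ1 (zstar θ1) - Dθ θ2 (zstar θ2)‖
      ≤ ‖Dθ θ1 (zstar θ1) - Dθ θ1 (zstar θ2)‖ + ‖Dθ θ1 (zstar θ2) - Dθ θ2 (zstar θ2)‖ :=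
        norm_sub_le_norm_sub_add_norm_sub _ _ _
    _ ≤ Lz * ‖zstar θ1 - zstar θ2‖ + Lθ * ‖θ1 - θ2‖ :=
        add_le_add (hDθz θ1 _ _) (hDθθ _ θ1 θ2)
    _ ≤ Lz * ((Lzθ / μ) * ‖θ1 - θ2‖) + Lθ * ‖θ1 - θ2‖ := by
        gcongr; exact key θ1 θ2
    _ = (Lz * Lzθ / μ + Lθ) * ‖θ1 - θ2‖ := by ring
end
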